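/- For every integer d ≥ 2, every n ∈ ℕ and every j ∈ ℤ, the coefficients of the Laurent polynomial w_{d,n} satisfy ((d−1)n+2+(d+1)j)·(w_{d,n}, t^{−j}) = ((d−1)n+2−(d+1)j)·(w_{d,n}, t^{j}). -/

import Mathlib

/-!
Put `F = ∑ₙ w_{d,n} xⁿ` and let `G` be `F` with `t` replaced by `t⁻¹`. The recursion says
`F = 1 + x t G^d` and `G = 1 + x t⁻¹ F^d`. The derivations `D = (d-1) x∂ₓ + (d+1) t∂ₜ` and
`D' = (d-1) x∂ₓ - (d+1) t∂ₜ` scale `x t` and `x t⁻¹` by constants, so implicit differentiation of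
the two equations determines `D G` and `D' F` up to the unit factor `1 - uv`, where `u`, `v` are
the partial derivatives of the right-hand sides. Eliminating gives `D G + 2 G = D' F + 2 F`,
and the coefficient of `xⁿ tʲ` of this identity is the claim.
-/

open LaurentPolynomial PowerSeries

namespace LaurentPolynomial

variable {R : Type*} [CommRing R]

noncomputable def eulerDerivation : Derivation R R[T;T⁻¹] R[T;T⁻¹] :=
  Derivation.mk'
    { toFun := fun f => AddMonoidAlgebra.ofCoeff ((fun j : ℤ => (j : R)) • f.coeff)
      map_add' := fun f g => by ext; simp
      map_smul' := fun r f => by ext; simp [mul_left_comm] }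
    fun f g => by
      induction f using LaurentPolynomial.induction_on' with
      | add p q hp hq => simp only [add_mul, map_add, hp, hq, add_smul, smul_add]; abel
      | C_mul_T n a =>
        induction g using LaurentPolynomial.induction_on' with
        | add p q hp hq => simp only [mul_add, map_add, hp, hq, add_smul, smul_add]; abel
        | C_mul_T m b =>
          have hmonomial (c : R) (k : ℤ) :
              AddMonoidAlgebra.ofCoeff ((fun j : ℤ => (j : R)) • (C c * T k).coeff) =
                C (k * c) * T k := by
            rw [← single_eq_C_mul_T, ← single_eq_C_mul_T]
            ext j
            simp only [Finsupp.coe_pointwise_smul, AddMonoidAlgebra.coeff_single,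
              Finsupp.single_apply, smul_eq_mul]
            split_ifs with h <;> simp [h]
          simp only [LinearMap.coe_mk, AddHom.coe_mk, smul_eq_mul]
          rw [show C a * T n * (C b * T m) = C (a * b) * T (n + m) by rw [T_add, map_mul]; ring,
            hmonomial, hmonomial, hmonomial, T_add]
          push_cast
          simp only [map_mul, map_add, map_intCast]
          ring

@[simp] lemma coeff_eulerDerivation (f : R[T;T⁻¹]) (j : ℤ) :
    (eulerDerivation f).coeff j = j * f.coeff j := rfl

end LaurentPolynomial

namespace Derivation

variable {R A : Type*} [CommRing R] [CommRing A] [Algebra R A]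

noncomputable def powerSeriesMapCoeffs (D : Derivation R A A) : Derivation R A⟦X⟧ A⟦X⟧ :=
  Derivation.mk'
    { toFun := fun f => PowerSeries.mk fun n => D (coeff n f)
      map_add' := fun f g => by ext; simp
      map_smul' := fun r f => by ext; simp }
    fun f g => by
      ext n
      simp only [LinearMap.coe_mk, AddHom.coe_mk, smul_eq_mul, mul_comm g, map_add, coeff_mul,
        coeff_mk, map_sum, D.leibniz, ← Finset.sum_add_distrib]
      exact Finset.sum_congr rfl fun p _ => by ring

@[simp] lemma coeff_powerSeriesMapCoeffs (D : Derivation R A A) (f : A⟦X⟧) (n : ℕ) :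
    coeff n (D.powerSeriesMapCoeffs f) = D (coeff n f) :=
  coeff_mk (R := A) n fun n => D (coeff n f)

end Derivation

namespace PowerSeries

lemma coeff_X_mul_derivative {A : Type*} [CommSemiring A] (f : A⟦X⟧) (n : ℕ) :
    coeff n (X * d⁄dX A f) = n • coeff n f := by
  cases n with
  | zero => simp
  | succ n => rw [coeff_succ_X_mul, coeff_derivative, nsmul_eq_mul, mul_comm]; push_cast; rfl

lemma coeff_pow_eq_sum_antidiagonalTuple {A : Type*} [CommSemiring A] (φ : A⟦X⟧) (k n : ℕ) :
    coeff n (φ ^ k) = ∑ l ∈ Finset.Nat.antidiagonalTuple k n, ∏ i, coeff (l i) φ := by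
  rw [← Fin.prod_const, coeff_prod]
  exact Finset.sum_equiv Finsupp.equivFunOnFinite (by simp [Finset.Nat.mem_antidiagonalTuple])
    (by simp)

lemma mk_eq_C_add_X_mul_C_mul_pow {A : Type*} [CommSemiring A] {u v : ℕ → A} {c : A} {d : ℕ}
    (hu : ∀ n, u (n + 1) = c * ∑ k ∈ Finset.Nat.antidiagonalTuple d n, ∏ i, v (k i)) :
    mk u = C (u 0) + X * C c * mk v ^ d := by
  ext (_ | n)
  · simp
  · simp [mul_assoc, coeff_succ_X_mul, coeff_pow_eq_sum_antidiagonalTuple, hu]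

end PowerSeries

section WeightedEuler

variable {R : Type*} [CommRing R]

/-- `α x∂ₓ + β t∂ₜ`, where `x` is the power series variable and `t` the Laurent variable. -/
noncomputable def weightedEuler (α β : R) : Derivation R R[T;T⁻¹]⟦X⟧ R[T;T⁻¹]⟦X⟧ :=
  α • (X : R[T;T⁻¹]⟦X⟧) • (d⁄dX R[T;T⁻¹]).restrictScalars R +
    β • eulerDerivation.powerSeriesMapCoeffs

lemma coeff_coeff_weightedEuler (α β : R) (f : R[T;T⁻¹]⟦X⟧) (n : ℕ) (j : ℤ) :
    (coeff n (weightedEuler α β f)).coeff j = (α * n + β * j) * (coeff n f).coeff j := by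
  simp only [weightedEuler, Derivation.add_apply, Derivation.smul_apply,
    Derivation.restrictScalars_apply, smul_eq_mul, map_add, PowerSeries.coeff_smul,
    coeff_X_mul_derivative, Derivation.coeff_powerSeriesMapCoeffs, AddMonoidAlgebra.coeff_add,
    Finsupp.add_apply, AddMonoidAlgebra.coeff_smul_apply, coeff_eulerDerivation]
  rw [nsmul_eq_mul]
  ring

lemma weightedEuler_X_mul_C_T (α β : R) (k : ℤ) :
    weightedEuler α β (X * PowerSeries.C (T k)) = (α + β * k) • (X * PowerSeries.C (T k)) := by
  ext n j
  rw [coeff_coeff_weightedEuler, PowerSeries.coeff_smul, AddMonoidAlgebra.coeff_smul_apply,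
    smul_eq_mul]
  rcases n with _ | _ | n
  · simp
  · by_cases h : k = j <;> simp [h]
  · simp [coeff_X]

end WeightedEuler

namespace Derivation

variable {R S : Type*} [CommRing R] [CommRing S] [Algebra R S]

lemma apply_one_add_mul_pow (D : Derivation R S S) (a G : S) (d : ℕ) :
    D (1 + a * G ^ d) = D a * G ^ d + d * a * G ^ (d - 1) * D G := by
  simp only [map_add, map_one_eq_zero, leibniz, leibniz_pow, smul_eq_mul, nsmul_eq_mul]
  ring

theorem apply_add_two_nsmul_eq_of_coupled (D D' : Derivation R S S) (d : ℕ) {F G a b : S}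
    (hF : F = 1 + a * G ^ d) (hG : G = 1 + b * F ^ d)
    (ha : D a = 2 * d * a) (hb : D b = -2 * b) (ha' : D' a = -2 * a) (hb' : D' b = 2 * d * b)
    (hunit : IsUnit (1 - d * a * G ^ (d - 1) * (d * b * F ^ (d - 1)))) :
    D G + 2 • G = D' F + 2 • F := by
  set u := d * a * G ^ (d - 1)
  set v := d * b * F ^ (d - 1)
  have hDF : D F = 2 * d * a * G ^ d + u * D G := by
    conv_lhs => rw [hF]
    rw [apply_one_add_mul_pow, ha]
  have hDG : D G = -2 * b * F ^ d + v * D F := by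
    conv_lhs => rw [hG]
    rw [apply_one_add_mul_pow, hb]
  have hD'F : D' F = -2 * a * G ^ d + u * D' G := by
    conv_lhs => rw [hF]
    rw [apply_one_add_mul_pow, ha']
  have hD'G : D' G = 2 * d * b * F ^ d + v * D' F := by
    conv_lhs => rw [hG]
    rw [apply_one_add_mul_pow, hb']
  have hcross : d * (v * (a * G ^ d) - u * (b * F ^ d)) = u * v * (G - F) := by
    rcases d with _ | d
    · simp [u]
    · simp only [u, v, Nat.add_sub_cancel, pow_succ]
      ring
  refine hunit.mul_left_cancel (sub_eq_zero.mp ?_)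
  linear_combination (hDG + v * hDF) - (hD'F + u * hD'G) + 2 * hcross + 2 * hG - 2 * hF

end Derivation

theorem stmt16_general (d : ℕ) (w : ℕ → ℚ[T;T⁻¹])
    (hw0 : w 0 = 1)
    (hw : ∀ n : ℕ, w (n + 1) =
      T 1 * ∑ k ∈ Finset.Nat.antidiagonalTuple d n, ∏ i : Fin d, invert (w (k i)))
    (n : ℕ) (j : ℤ) :
    (((d : ℚ) - 1) * n + 2 + ((d : ℚ) + 1) * (j : ℚ)) * (w n).coeff (-j)
      = (((d : ℚ) - 1) * n + 2 - ((d : ℚ) + 1) * (j : ℚ)) * (w n).coeff j := by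
  have hF : mk w = 1 + X * PowerSeries.C (T 1) * (mk fun m => invert (w m)) ^ d := by
    rw [mk_eq_C_add_X_mul_C_mul_pow (v := fun m => invert (w m)) hw, hw0, map_one]
  have hG : (mk fun m => invert (w m)) = 1 + X * PowerSeries.C (T (-1)) * mk w ^ d := by
    rw [mk_eq_C_add_X_mul_C_mul_pow (v := w) (c := T (-1)) fun m => ?_, hw0, map_one, map_one]
    simp [hw, map_prod, involutive_invert _]
  have hscale (α β : ℚ) (k : ℤ) (c : ℚ[T;T⁻¹]⟦X⟧) (hc : algebraMap ℚ _ (α + β * k) = c) :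
      weightedEuler α β (X * PowerSeries.C (T k)) = c * (X * PowerSeries.C (T k)) := by
    rw [weightedEuler_X_mul_C_T, Algebra.smul_def, hc]
  have key := Derivation.apply_add_two_nsmul_eq_of_coupled
    (weightedEuler ((d : ℚ) - 1) (d + 1)) (weightedEuler ((d : ℚ) - 1) (-(d + 1))) d hF hG
    (hscale _ _ _ _ (by simp; ring)) (hscale _ _ _ _ (by simp; ring))
    (hscale _ _ _ _ (by simp; ring)) (hscale _ _ _ _ (by simp; ring))
    (by simp [isUnit_iff_constantCoeff])
  have hcoeff := congrArg (fun f => (coeff n f).coeff j) key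
  simp only [map_add, map_nsmul, AddMonoidAlgebra.coeff_add, Finsupp.add_apply,
    AddMonoidAlgebra.coeff_smul_apply, coeff_coeff_weightedEuler, coeff_mk, invert_apply] at hcoeff
  push_cast [nsmul_eq_mul] at hcoeff
  linear_combination hcoeff

/-- For `d ≥ 2` and the Laurent polynomials `w_{d,n}` defined by
`w_{d,0} = 1` and `w_{d,n+1}(t) = t·∑_{k₁+⋯+k_d = n} ∏ᵢ w_{d,kᵢ}(t⁻¹)`, the coefficients
satisfy `((d−1)n+2+(d+1)j)·(w_{d,n}, t^{−j}) = ((d−1)n+2−(d+1)j)·(w_{d,n}, t^{j})`. -/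
theorem stmt16 (d : ℕ) (hd : 2 ≤ d) (w : ℕ → ℚ[T;T⁻¹])
    (hw0 : w 0 = 1)
    (hw : ∀ n : ℕ, w (n + 1) =
      T 1 * ∑ k ∈ Finset.Nat.antidiagonalTuple d n, ∏ i : Fin d, invert (w (k i)))
    (n : ℕ) (j : ℤ) :
    (((d : ℚ) - 1) * n + 2 + ((d : ℚ) + 1) * (j : ℚ)) * (w n).coeff (-j)
      = (((d : ℚ) - 1) * n + 2 - ((d : ℚ) + 1) * (j : ℚ)) * (w n).coeff j :=
  stmt16_general d w hw0 hw n j
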